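/- Let G be a (1,0)-stable graph and Y a maximum independent set. Then Hall's condition holds from Y to V(G) \ Y: for every subset Y' ⊆ Y, the neighborhood N(Y') in V(G) \ Y' has size at least |Y'|. -/

import Mathlib

open SimpleGraph Set

/-- The independence number of `G` restricted to a vertex subset `A`:
the largest cardinality of a finite set of vertices inside `A` that is
pairwise non-adjacent in `G`. -/
noncomputable def indepNumOn {V : Type*} (G : SimpleGraph V) (A : Set V) : ℕ :=
  sSup {n | ∃ s : Finset V, ↑s ⊆ A ∧ s.card = n ∧
    ∀ x ∈ s, ∀ y ∈ s, x ≠ y → ¬ G.Adj x y}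

/-- The independence number of `G`. -/
noncomputable def indepNum {V : Type*} (G : SimpleGraph V) : ℕ :=
  indepNumOn G Set.univ

/-- `G` is `(k, l)`-stable: removing any `k` vertices decreases the
independence number by at most `l`. -/
def IsStable {V : Type*} (G : SimpleGraph V) (k l : ℕ) : Prop :=
  ∀ S : Finset V, S.card = k → _root_.indepNum G ≤ indepNumOn G (↑S : Set V)ᶜ + l

/-! Let `N(Z)` be the exterior neighbourhood of an independent set `Z`. By (1,0)-stability, for
every `v ∈ Z` some maximum independent set `I` avoids `v`. Exchanging `I ∩ N(Z)` for `Z \ I` in `I`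
gives an independent set, so `|Z \ I| ≤ |I ∩ N(Z)|` by maximality of `I`. Induction applied to the
smaller set `Z ∩ I ⊂ Z` gives `|Z ∩ I| ≤ |N(Z ∩ I)|`, and `N(Z ∩ I)` lies in `N(Z)` and misses `I`,
so `|Z| = |Z ∩ I| + |Z \ I| ≤ |N(Z ∩ I)| + |I ∩ N(Z)| ≤ |N(Z)|`. -/

section IndepNumOn

variable {V : Type*} [Finite V] (G : SimpleGraph V) (A : Set V)

lemma bddAbove_indepNumOn_set :
    BddAbove {n | ∃ s : Finset V, ↑s ⊆ A ∧ s.card = n ∧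
      ∀ x ∈ s, ∀ y ∈ s, x ≠ y → ¬ G.Adj x y} := by
  have := Fintype.ofFinite V
  exact ⟨Fintype.card V, by rintro n ⟨s, -, rfl, -⟩; exact s.card_le_univ⟩

variable {G A}

lemma card_le_indepNumOn {s : Finset V} (hsA : ↑s ⊆ A) (hs : G.IsIndepSet ↑s) :
    s.card ≤ indepNumOn G A :=
  le_csSup (bddAbove_indepNumOn_set G A) ⟨s, hsA, rfl, fun _ hx _ hy => hs hx hy⟩

variable (G A)

lemma exists_isIndepSet_card_eq_indepNumOn :
    ∃ s : Finset V, ↑s ⊆ A ∧ G.IsIndepSet ↑s ∧ s.card = indepNumOn G A := by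
  obtain ⟨s, hsA, hcard, hs⟩ :=
    Nat.sSup_mem (by exact ⟨0, ∅, by simp⟩) (bddAbove_indepNumOn_set G A)
  exact ⟨s, hsA, fun _ hx _ hy => hs _ hx _ hy, hcard⟩

variable {G}

lemma exists_isMaximumIndepSet_notMem {v : V}
    (hv : indepNumOn G ({v} : Set V)ᶜ = _root_.indepNum G) :
    ∃ I : Finset V, G.IsMaximumIndepSet I ∧ v ∉ I := by
  obtain ⟨I, hIv, hI, hcard⟩ := exists_isIndepSet_card_eq_indepNumOn G ({v} : Set V)ᶜ
  refine ⟨I, ⟨hI, fun t ht => ?_⟩, fun hvI => hIv hvI rfl⟩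
  rw [hcard, hv]
  exact card_le_indepNumOn (Set.subset_univ _) ht

end IndepNumOn

namespace SimpleGraph

variable {V : Type*} (G : SimpleGraph V) [Fintype V] [DecidableEq V] [DecidableRel G.Adj]

def exteriorNeighborFinset (A : Finset V) : Finset V :=
  {u | u ∉ A ∧ ∃ y ∈ A, G.Adj y u}

variable {G}

@[simp]
lemma mem_exteriorNeighborFinset {A : Finset V} {u : V} :
    u ∈ G.exteriorNeighborFinset A ↔ u ∉ A ∧ ∃ y ∈ A, G.Adj y u := by
  simp [exteriorNeighborFinset]

lemma exteriorNeighborFinset_mono_of_isIndepSet {A B : Finset V} (hA : G.IsIndepSet ↑A)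
    (hBA : B ⊆ A) : G.exteriorNeighborFinset B ⊆ G.exteriorNeighborFinset A := by
  intro u hu
  obtain ⟨-, y, hyB, hyu⟩ := mem_exteriorNeighborFinset.1 hu
  exact mem_exteriorNeighborFinset.2
    ⟨fun huA => hA (hBA hyB) huA hyu.ne hyu, y, hBA hyB, hyu⟩

lemma disjoint_exteriorNeighborFinset_of_subset {I B : Finset V} (hI : G.IsIndepSet ↑I)
    (hBI : B ⊆ I) : Disjoint I (G.exteriorNeighborFinset B) := by
  refine Finset.disjoint_left.2 fun u huI hu => ?_
  obtain ⟨-, y, hyB, hyu⟩ := mem_exteriorNeighborFinset.1 hu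
  exact hI (hBI hyB) huI hyu.ne hyu

lemma IsIndepSet.sdiff_exteriorNeighborFinset_union {I Z : Finset V} (hI : G.IsIndepSet ↑I)
    (hZ : G.IsIndepSet ↑Z) : G.IsIndepSet ↑(I \ G.exteriorNeighborFinset Z ∪ Z) := by
  have cross : ∀ a ∈ I \ G.exteriorNeighborFinset Z, ∀ b ∈ Z, ¬ G.Adj a b := by
    intro a ha b hb hab
    obtain ⟨-, haN⟩ := Finset.mem_sdiff.1 ha
    by_cases haZ : a ∈ Z
    · exact hZ haZ hb hab.ne hab
    · exact haN (mem_exteriorNeighborFinset.2 ⟨haZ, b, hb, hab.symm⟩)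
  intro x hx y hy hxy hadj
  simp only [Finset.coe_union, Set.mem_union, Finset.mem_coe] at hx hy
  rcases hx with hx | hx <;> rcases hy with hy | hy
  · exact hI (Finset.mem_sdiff.1 hx).1 (Finset.mem_sdiff.1 hy).1 hxy hadj
  · exact cross x hx y hy hadj
  · exact cross y hy x hx hadj.symm
  · exact hZ hx hy hxy hadj

lemma card_sdiff_le_card_inter_exteriorNeighborFinset {I Z : Finset V}
    (hI : G.IsMaximumIndepSet I) (hZ : G.IsIndepSet ↑Z) :
    (Z \ I).card ≤ (I ∩ G.exteriorNeighborFinset Z).card := by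
  set N := G.exteriorNeighborFinset Z
  have hJ : G.IsIndepSet ↑(I \ N ∪ Z \ I) :=
    Set.Pairwise.mono (by gcongr; exact Finset.sdiff_subset)
      (hI.isIndepSet.sdiff_exteriorNeighborFinset_union hZ)
  have hdisj : Disjoint (I \ N) (Z \ I) :=
    Finset.disjoint_of_subset_left Finset.sdiff_subset Finset.disjoint_sdiff
  have hmax := hI.maximum _ hJ
  rw [Finset.card_union_of_disjoint hdisj, ← Finset.card_sdiff_add_card_inter I N] at hmax
  omega

theorem card_le_card_exteriorNeighborFinset
    (h : ∀ v, ∃ I : Finset V, G.IsMaximumIndepSet I ∧ v ∉ I) {Z : Finset V}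
    (hZ : G.IsIndepSet ↑Z) : Z.card ≤ (G.exteriorNeighborFinset Z).card := by
  induction Z using Finset.strongInduction with
  | H Z ih =>
  rcases Z.eq_empty_or_nonempty with rfl | ⟨v, hvZ⟩
  · simp
  obtain ⟨I, hI, hvI⟩ := h v
  have hZI : Z ∩ I ⊂ Z :=
    Finset.ssubset_iff_of_subset Finset.inter_subset_left |>.2
      ⟨v, hvZ, fun hv => hvI (Finset.mem_inter.1 hv).2⟩
  have hdisj : Disjoint (G.exteriorNeighborFinset (Z ∩ I)) (I ∩ G.exteriorNeighborFinset Z) :=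
    (disjoint_exteriorNeighborFinset_of_subset hI.isIndepSet
      Finset.inter_subset_right).symm.mono_right Finset.inter_subset_left
  calc Z.card = (Z ∩ I).card + (Z \ I).card := (Finset.card_inter_add_card_sdiff Z I).symm
    _ ≤ (G.exteriorNeighborFinset (Z ∩ I)).card + (I ∩ G.exteriorNeighborFinset Z).card :=
        add_le_add (ih _ hZI (Set.Pairwise.mono (by simp) hZ))
          (card_sdiff_le_card_inter_exteriorNeighborFinset hI hZ)
    _ = (G.exteriorNeighborFinset (Z ∩ I) ∪ I ∩ G.exteriorNeighborFinset Z).card :=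
        (Finset.card_union_of_disjoint hdisj).symm
    _ ≤ (G.exteriorNeighborFinset Z).card :=
        Finset.card_le_card (Finset.union_subset
          (exteriorNeighborFinset_mono_of_isIndepSet hZ Finset.inter_subset_left)
          Finset.inter_subset_right)

end SimpleGraph

theorem hall_condition_max_indep_general {V : Type*} [Fintype V] (G : SimpleGraph V)
    (hstable : ∀ v : V, indepNumOn G ({v} : Set V)ᶜ = _root_.indepNum G)
    (Y : Finset V) (hind : ∀ x ∈ Y, ∀ y ∈ Y, x ≠ y → ¬ G.Adj x y)
    (Y' : Finset V) (hY' : Y' ⊆ Y) :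
    Y'.card ≤ {u : V | u ∉ Y' ∧ ∃ y ∈ Y', G.Adj y u}.ncard := by
  classical
  have hY'ind : G.IsIndepSet ↑Y' := fun x hx y hy => hind x (hY' hx) y (hY' hy)
  have hN : {u : V | u ∉ Y' ∧ ∃ y ∈ Y', G.Adj y u} = ↑(G.exteriorNeighborFinset Y') := by
    ext u; simp
  rw [hN, Set.ncard_coe_finset]
  exact G.card_le_card_exteriorNeighborFinset
    (fun v => exists_isMaximumIndepSet_notMem (hstable v)) hY'ind

theorem hall_condition_max_indep {V : Type*} [Fintype V] (G : SimpleGraph V)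
    (hstable : ∀ v : V, indepNumOn G ({v} : Set V)ᶜ = _root_.indepNum G)
    (Y : Finset V) (hind : ∀ x ∈ Y, ∀ y ∈ Y, x ≠ y → ¬ G.Adj x y)
    (hcard : Y.card = _root_.indepNum G)
    (Y' : Finset V) (hY' : Y' ⊆ Y) :
    Y'.card ≤ {u : V | u ∉ Y' ∧ ∃ y ∈ Y', G.Adj y u}.ncard :=
  hall_condition_max_indep_general G hstable Y hind Y' hY'
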